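/- Under the hypotheses of the optimal-POVM construction — ρ0, ρ1 n×n density matrices with rank(ρ0) + rank(ρ1) = rank(ρ0 + ρ1) = n, Σ = ρ0 + ρ1, F0 = √(√ρ0 · ρ1 · √ρ0), F1 = √(√ρ1 · ρ0 · √ρ1), V unitary with √ρ0·√ρ1 = F0·V, α > 0 with ρ0 − α·F0 and ρ1 − (1/α)·F1 positive semidefinite, and E? = Σ⁻¹·(√α·√ρ0 + (1/√α)·√ρ1·V†)·F0·(√α·√ρ0 + (1/√α)·V·√ρ1)·Σ⁻¹ — one has Tr(E? ρ0) = α·F and Tr(E? ρ1) = F/α, where F = Tr(F0); hence for a priori probabilities η0, η1 the failure probability equals η0·α·F + η1·F/α. -/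

import Mathlib

open Matrix
open scoped ComplexOrder

/-- The positive semidefinite square root of a matrix (zero if the matrix is not
positive semidefinite). -/
noncomputable def msqrt {n : ℕ} (A : Matrix (Fin n) (Fin n) ℂ) : Matrix (Fin n) (Fin n) ℂ :=
  open scoped Classical in
  if h : A.PosSemidef then
    (h.1.eigenvectorUnitary : Matrix (Fin n) (Fin n) ℂ) *
      diagonal ((↑) ∘ Real.sqrt ∘ h.1.eigenvalues) *
      (star h.1.eigenvectorUnitary : Matrix (Fin n) (Fin n) ℂ)
  else 0

/-!
Because `rank ρ₀ + rank ρ₁ = rank Σ`, the ranges of `ρ₀` and `ρ₁` meet trivially, which forces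
`ρ₀ Σ⁻¹ ρ₁ = 0` and hence `√ρ₀ Σ⁻¹ √ρ₁ = 0`; together with `Σ⁻¹ Σ = 1` this gives
`√ρᵢ Σ⁻¹ ρᵢ = √ρᵢ`. Against `ρ₀` (resp. `ρ₁`) all cross terms of `E?` then vanish, and the polar
decomposition, read as `F₀ = √ρ₀ √ρ₁ V†`, collapses what is left to `α Tr F₀` (resp. `Tr F₀ / α`).
-/

namespace Matrix

variable {n : Type*} [Fintype n]

section Field

variable {K : Type*} [Field K]

theorem isUnit_of_rank_eq_card [DecidableEq n] {A : Matrix n n K}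
    (h : A.rank = Fintype.card n) : IsUnit A := by
  refine mulVec_surjective_iff_isUnit.mp ((LinearMap.range_eq_top (f := A.mulVecLin)).mp ?_)
  apply Submodule.eq_top_of_finrank_eq
  rw [Module.finrank_fintype_fun_eq_card]
  exact h

theorem range_mulVecLin_inf_eq_bot_of_rank_add_eq {m : Type*} [Fintype m]
    {A B : Matrix m n K} (h : A.rank + B.rank = (A + B).rank) :
    LinearMap.range A.mulVecLin ⊓ LinearMap.range B.mulVecLin = ⊥ := by
  have hsum := Submodule.finrank_sup_add_finrank_inf_eq
    (LinearMap.range A.mulVecLin) (LinearMap.range B.mulVecLin)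
  have hle : (A + B).rank ≤ Module.finrank K
      ↥(LinearMap.range A.mulVecLin ⊔ LinearMap.range B.mulVecLin) := by
    refine Submodule.finrank_mono ?_
    rw [mulVecLin_add]
    exact LinearMap.range_add_le _ _
  rw [rank, rank] at h
  rw [← Submodule.finrank_eq_zero]
  omega

/-- `A (A + B)⁻¹ B = B (A + B)⁻¹ A` has its range inside the ranges of both `A` and `B`,
which meet trivially when the ranks add up. -/
theorem mul_nonsing_inv_add_mul_eq_zero [DecidableEq n] {A B : Matrix n n K}
    (h : A.rank + B.rank = (A + B).rank) : A * (A + B)⁻¹ * B = 0 := by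
  set S := A + B with hS
  by_cases hdet : IsUnit S.det
  swap
  · rw [nonsing_inv_apply_not_isUnit _ hdet, Matrix.mul_zero, Matrix.zero_mul]
  have hswap : A * S⁻¹ * B = B * (S⁻¹ * A) := by
    have hA : A = S - B := by rw [hS, add_sub_cancel_right]
    rw [hA, Matrix.sub_mul, Matrix.mul_sub, mul_nonsing_inv _ hdet, nonsing_inv_mul _ hdet]
    simp only [Matrix.sub_mul, Matrix.mul_sub, Matrix.one_mul, Matrix.mul_one, Matrix.mul_assoc]
  have hrange : LinearMap.range (A * S⁻¹ * B).mulVecLin ≤ ⊥ := by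
    rw [← range_mulVecLin_inf_eq_bot_of_rank_add_eq h]
    refine le_inf ?_ ?_
    · rw [Matrix.mul_assoc, mulVecLin_mul]
      exact LinearMap.range_comp_le_range _ _
    · rw [hswap, mulVecLin_mul]
      exact LinearMap.range_comp_le_range _ _
  rw [le_bot_iff, LinearMap.range_eq_bot] at hrange
  exact toLin'.injective (by rw [toLin'_apply', hrange, map_zero])

end Field

theorem IsHermitian.mul_mul_eq_zero_of_mul_self_mul_mul_self {R : Type*} [PartialOrder R]
    [NonUnitalRing R] [StarRing R] [StarOrderedRing R] [NoZeroDivisors R]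
    {S T G : Matrix n n R} (hS : S.IsHermitian) (hT : T.IsHermitian)
    (h : S * S * G * (T * T) = 0) : S * G * T = 0 := by
  have hSG : S * (G * (T * T)) = 0 := by
    rw [← conjTranspose_mul_self_mul_eq_zero, hS.eq, ← h]
    simp only [Matrix.mul_assoc]
  rw [← mul_self_mul_conjTranspose_eq_zero, hT.eq, Matrix.mul_assoc, hSG]

section InconclusiveElement

variable {K : Type*} [Field K] [DecidableEq n]

/-- The failure element `E?` of the POVM in the notation `G = Σ⁻¹`, `S₀ = √ρ₀`, `S₁ = √ρ₁`,
`F = F₀`, `s = √α`, with `W` in the role of `V†`. -/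
def inconclusiveElement (G S₀ S₁ V W F : Matrix n n K) (s : K) : Matrix n n K :=
  G * (s • S₀ + s⁻¹ • (S₁ * W)) * F * (s • S₀ + s⁻¹ • (V * S₁)) * G

variable {G S₀ S₁ V W F : Matrix n n K}

theorem mul_mul_mul_self_of_mul_add_eq_one (hG : G * (S₀ * S₀ + S₁ * S₁) = 1)
    (h₀₁ : S₀ * G * S₁ = 0) : S₀ * G * (S₀ * S₀) = S₀ := by
  have h := congrArg (S₀ * ·) hG
  simp only [Matrix.mul_add, Matrix.mul_one, ← Matrix.mul_assoc, h₀₁, Matrix.zero_mul,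
    add_zero] at h
  simpa only [Matrix.mul_assoc] using h

theorem mul_self_mul_mul_of_add_mul_eq_one (hG : (S₀ * S₀ + S₁ * S₁) * G = 1)
    (h₁₀ : S₁ * G * S₀ = 0) : S₀ * S₀ * G * S₀ = S₀ := by
  have h := congrArg (· * S₀) hG
  simp only [Matrix.add_mul, Matrix.one_mul, Matrix.mul_assoc, h₁₀, Matrix.mul_zero,
    add_zero] at h
  simpa only [Matrix.mul_assoc] using h

theorem trace_inconclusiveElement_mul_left (s : K) (hG : G * (S₀ * S₀ + S₁ * S₁) = 1)
    (h₀₁ : S₀ * G * S₁ = 0) (h₁₀ : S₁ * G * S₀ = 0) (hpolar : S₀ * S₁ = F * V)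
    (hVW : V * W = 1) :
    (inconclusiveElement G S₀ S₁ V W F s * (S₀ * S₀)).trace = s * s * F.trace := by
  set M := s • S₀ + s⁻¹ • (S₁ * W)
  set N := s • S₀ + s⁻¹ • (V * S₁)
  have hF : F = S₀ * S₁ * W := by rw [hpolar, Matrix.mul_assoc, hVW, Matrix.mul_one]
  have hS₀ := mul_mul_mul_self_of_mul_add_eq_one hG h₀₁
  have hN : N * G * (S₀ * S₀) = s • S₀ :=
    calc N * G * (S₀ * S₀) = s • (S₀ * G * (S₀ * S₀)) + s⁻¹ • (V * (S₁ * G * S₀) * S₀) := by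
          simp only [N, Matrix.add_mul, Matrix.smul_mul, Matrix.mul_assoc]
      _ = s • S₀ := by rw [hS₀, h₁₀, Matrix.mul_zero, Matrix.zero_mul, smul_zero, add_zero]
  have hM : S₀ * G * M = s • (S₀ * G * S₀) := by
    simp only [M, Matrix.mul_add, Matrix.mul_smul, ← Matrix.mul_assoc, h₀₁, Matrix.zero_mul,
      smul_zero, add_zero]
  have hPF : S₀ * G * S₀ * F = F :=
    calc S₀ * G * S₀ * F = S₀ * G * (S₀ * S₀) * S₁ * W := by
          rw [hF]; simp only [Matrix.mul_assoc]
      _ = F := by rw [hS₀, hF]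
  calc (inconclusiveElement G S₀ S₁ V W F s * (S₀ * S₀)).trace
      = (G * M * F * (N * G * (S₀ * S₀))).trace := by
        simp only [inconclusiveElement, M, N, Matrix.mul_assoc]
    _ = s * (S₀ * (G * M * F)).trace := by
        rw [hN, Matrix.mul_smul, trace_smul, smul_eq_mul, trace_mul_comm]
    _ = s * s * F.trace := by
        rw [← Matrix.mul_assoc, ← Matrix.mul_assoc, hM, Matrix.smul_mul, hPF,
          trace_smul, smul_eq_mul, mul_assoc]

theorem trace_inconclusiveElement_mul_right (s : K) (hG : G * (S₀ * S₀ + S₁ * S₁) = 1)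
    (hG' : (S₀ * S₀ + S₁ * S₁) * G = 1) (h₀₁ : S₀ * G * S₁ = 0) (h₁₀ : S₁ * G * S₀ = 0)
    (hpolar : S₀ * S₁ = F * V) (hVW : V * W = 1) :
    (inconclusiveElement G S₀ S₁ V W F s * (S₁ * S₁)).trace = s⁻¹ * s⁻¹ * F.trace := by
  set M := s • S₀ + s⁻¹ • (S₁ * W)
  set N := s • S₀ + s⁻¹ • (V * S₁)
  have hF : F = S₀ * S₁ * W := by rw [hpolar, Matrix.mul_assoc, hVW, Matrix.mul_one]
  have hS₁ : S₁ * G * (S₁ * S₁) = S₁ :=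
    mul_mul_mul_self_of_mul_add_eq_one (by rwa [add_comm]) h₁₀
  have hS₁' : S₁ * S₁ * G * S₁ = S₁ :=
    mul_self_mul_mul_of_add_mul_eq_one (by rwa [add_comm]) h₀₁
  have hN : N * G * (S₁ * S₁) = s⁻¹ • (V * S₁) :=
    calc N * G * (S₁ * S₁) = s • (S₀ * G * S₁ * S₁) + s⁻¹ • (V * (S₁ * G * (S₁ * S₁))) := by
          simp only [N, Matrix.add_mul, Matrix.smul_mul, Matrix.mul_assoc]
      _ = s⁻¹ • (V * S₁) := by rw [hS₁, h₀₁, Matrix.zero_mul, smul_zero, zero_add]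
  have hM : S₁ * G * M = s⁻¹ • (S₁ * G * S₁ * W) := by
    simp only [M, Matrix.mul_add, Matrix.mul_smul, ← Matrix.mul_assoc, h₁₀, smul_zero, zero_add]
  have hQ : (S₁ * G * S₁ * W * F * V).trace = F.trace :=
    calc (S₁ * G * S₁ * W * F * V).trace = (S₁ * G * S₁ * W * (S₀ * S₁)).trace := by
          rw [Matrix.mul_assoc _ F V, ← hpolar]
      _ = (S₁ * (S₁ * G * S₁ * W * S₀)).trace := by rw [← Matrix.mul_assoc, trace_mul_comm]
      _ = (S₁ * W * S₀).trace := by simp only [← Matrix.mul_assoc]; rw [hS₁']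
      _ = F.trace := by rw [trace_mul_comm, hF, ← Matrix.mul_assoc]
  calc (inconclusiveElement G S₀ S₁ V W F s * (S₁ * S₁)).trace
      = (G * M * F * (N * G * (S₁ * S₁))).trace := by
        simp only [inconclusiveElement, M, N, Matrix.mul_assoc]
    _ = s⁻¹ * (S₁ * (G * M * F * V)).trace := by
        rw [hN, Matrix.mul_smul, trace_smul, smul_eq_mul, ← Matrix.mul_assoc, trace_mul_comm]
    _ = s⁻¹ * s⁻¹ * F.trace := by
        simp only [← Matrix.mul_assoc]
        rw [hM, Matrix.smul_mul, Matrix.smul_mul, trace_smul, smul_eq_mul, hQ,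
          mul_assoc]

end InconclusiveElement

end Matrix

theorem isHermitian_msqrt {n : ℕ} (A : Matrix (Fin n) (Fin n) ℂ) : (msqrt A).IsHermitian := by
  unfold msqrt
  split_ifs
  · refine isHermitian_mul_mul_conjTranspose _ (isHermitian_diagonal_of_self_adjoint _ ?_)
    ext i
    simp
  · exact isHermitian_zero

theorem msqrt_mul_self {n : ℕ} {A : Matrix (Fin n) (Fin n) ℂ} (hA : A.PosSemidef) :
    msqrt A * msqrt A = A := by
  set U : Matrix (Fin n) (Fin n) ℂ := (hA.1.eigenvectorUnitary : Matrix (Fin n) (Fin n) ℂ)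
  have hUU : Uᴴ * U = 1 := Unitary.coe_star_mul_self _
  rw [msqrt, dif_pos hA]
  conv_rhs => rw [hA.1.spectral_theorem, Unitary.conjStarAlgAut_apply]
  calc _ = U * (diagonal ((↑) ∘ Real.sqrt ∘ hA.1.eigenvalues) * (Uᴴ * U) *
        diagonal ((↑) ∘ Real.sqrt ∘ hA.1.eigenvalues)) * Uᴴ := by
        simp only [Matrix.mul_assoc]; rfl
    _ = _ := by
      rw [hUU, Matrix.mul_one, diagonal_mul_diagonal]
      congr 3
      funext i
      simp [← Complex.ofReal_mul, Real.mul_self_sqrt (hA.eigenvalues_nonneg i)]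

theorem msqrt_mul_nonsing_inv_add_mul_msqrt_eq_zero {n : ℕ} {ρ₀ ρ₁ : Matrix (Fin n) (Fin n) ℂ}
    (h₀ : ρ₀.PosSemidef) (h₁ : ρ₁.PosSemidef) (h : ρ₀.rank + ρ₁.rank = (ρ₀ + ρ₁).rank) :
    msqrt ρ₀ * (ρ₀ + ρ₁)⁻¹ * msqrt ρ₁ = 0 := by
  refine (isHermitian_msqrt ρ₀).mul_mul_eq_zero_of_mul_self_mul_mul_self (isHermitian_msqrt ρ₁) ?_
  rw [msqrt_mul_self h₀, msqrt_mul_self h₁]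
  exact mul_nonsing_inv_add_mul_eq_zero h

theorem optimal_povm_failure_probability_general {n : ℕ}
    (ρ0 ρ1 V Eq : Matrix (Fin n) (Fin n) ℂ)
    (hρ0 : ρ0.PosSemidef)
    (hρ1 : ρ1.PosSemidef)
    (hrank : ρ0.rank + ρ1.rank = (ρ0 + ρ1).rank)
    (hfull : (ρ0 + ρ1).rank = n)
    (hV' : V * Vᴴ = 1)
    (hpolar : msqrt ρ0 * msqrt ρ1 = msqrt (msqrt ρ0 * ρ1 * msqrt ρ0) * V)
    (α : ℝ) (hα : 0 < α)
    (hEq : Eq = (ρ0 + ρ1)⁻¹ *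
      ((Real.sqrt α : ℂ) • msqrt ρ0 + (Real.sqrt α : ℂ)⁻¹ • (msqrt ρ1 * Vᴴ)) *
      msqrt (msqrt ρ0 * ρ1 * msqrt ρ0) *
      ((Real.sqrt α : ℂ) • msqrt ρ0 + (Real.sqrt α : ℂ)⁻¹ • (V * msqrt ρ1)) *
      (ρ0 + ρ1)⁻¹)
    (η0 η1 : ℝ) :
    (Eq * ρ0).trace.re = α * (msqrt (msqrt ρ0 * ρ1 * msqrt ρ0)).trace.re ∧
      (Eq * ρ1).trace.re = (msqrt (msqrt ρ0 * ρ1 * msqrt ρ0)).trace.re / α ∧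
      η0 * (Eq * ρ0).trace.re + η1 * (Eq * ρ1).trace.re =
        η0 * (α * (msqrt (msqrt ρ0 * ρ1 * msqrt ρ0)).trace.re) +
          η1 * ((msqrt (msqrt ρ0 * ρ1 * msqrt ρ0)).trace.re / α) := by
  set F₀ := msqrt (msqrt ρ0 * ρ1 * msqrt ρ0)
  have hS₀ : msqrt ρ0 * msqrt ρ0 = ρ0 := msqrt_mul_self hρ0
  have hS₁ : msqrt ρ1 * msqrt ρ1 = ρ1 := msqrt_mul_self hρ1
  have hdet : IsUnit (ρ0 + ρ1).det :=
    (isUnit_iff_isUnit_det _).mp (isUnit_of_rank_eq_card (by rw [hfull, Fintype.card_fin]))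
  have h₀₁ := msqrt_mul_nonsing_inv_add_mul_msqrt_eq_zero hρ0 hρ1 hrank
  have h₁₀ := msqrt_mul_nonsing_inv_add_mul_msqrt_eq_zero hρ1 hρ0 (by rwa [add_comm, add_comm ρ1])
  rw [add_comm ρ1] at h₁₀
  have hG : (ρ0 + ρ1)⁻¹ * (msqrt ρ0 * msqrt ρ0 + msqrt ρ1 * msqrt ρ1) = 1 := by
    rw [hS₀, hS₁, nonsing_inv_mul _ hdet]
  have hG' : (msqrt ρ0 * msqrt ρ0 + msqrt ρ1 * msqrt ρ1) * (ρ0 + ρ1)⁻¹ = 1 := by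
    rw [hS₀, hS₁, mul_nonsing_inv _ hdet]
  have hs : (Real.sqrt α : ℂ) * Real.sqrt α = α := by
    rw [← Complex.ofReal_mul, Real.mul_self_sqrt hα.le]
  have htr₀ := trace_inconclusiveElement_mul_left (Real.sqrt α : ℂ) hG h₀₁ h₁₀ hpolar hV'
  have htr₁ := trace_inconclusiveElement_mul_right (Real.sqrt α : ℂ) hG hG' h₀₁ h₁₀ hpolar hV'
  have hE : Eq = inconclusiveElement (ρ0 + ρ1)⁻¹ (msqrt ρ0) (msqrt ρ1) V Vᴴ F₀ (Real.sqrt α) :=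
    hEq
  rw [← hE, hS₀, hs] at htr₀
  rw [← hE, hS₁, ← mul_inv, hs, ← Complex.ofReal_inv] at htr₁
  have hre₀ : (Eq * ρ0).trace.re = α * F₀.trace.re := by rw [htr₀, Complex.re_ofReal_mul]
  have hre₁ : (Eq * ρ1).trace.re = F₀.trace.re / α := by
    rw [htr₁, Complex.re_ofReal_mul, inv_mul_eq_div]
  exact ⟨hre₀, hre₁, by rw [hre₀, hre₁]⟩

/-- **Theorem 4 (failure probability of the constructed POVM).** Under the
hypotheses of the optimal-POVM construction, `Tr(E? ρ0) = α·F` and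
`Tr(E? ρ1) = F/α`, so the failure probability is `η0·α·F + η1·F/α`. -/
theorem optimal_povm_failure_probability {n : ℕ}
    (ρ0 ρ1 V Eq : Matrix (Fin n) (Fin n) ℂ)
    (hρ0 : ρ0.PosSemidef) (hρ0tr : ρ0.trace = 1)
    (hρ1 : ρ1.PosSemidef) (hρ1tr : ρ1.trace = 1)
    (hrank : ρ0.rank + ρ1.rank = (ρ0 + ρ1).rank)
    (hfull : (ρ0 + ρ1).rank = n)
    (hV : Vᴴ * V = 1) (hV' : V * Vᴴ = 1)
    (hpolar : msqrt ρ0 * msqrt ρ1 = msqrt (msqrt ρ0 * ρ1 * msqrt ρ0) * V)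
    (α : ℝ) (hα : 0 < α)
    (hpos0 : (ρ0 - (α : ℂ) • msqrt (msqrt ρ0 * ρ1 * msqrt ρ0)).PosSemidef)
    (hpos1 : (ρ1 - (α : ℂ)⁻¹ • msqrt (msqrt ρ1 * ρ0 * msqrt ρ1)).PosSemidef)
    (hEq : Eq = (ρ0 + ρ1)⁻¹ *
      ((Real.sqrt α : ℂ) • msqrt ρ0 + (Real.sqrt α : ℂ)⁻¹ • (msqrt ρ1 * Vᴴ)) *
      msqrt (msqrt ρ0 * ρ1 * msqrt ρ0) *
      ((Real.sqrt α : ℂ) • msqrt ρ0 + (Real.sqrt α : ℂ)⁻¹ • (V * msqrt ρ1)) *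
      (ρ0 + ρ1)⁻¹)
    (η0 η1 : ℝ) :
    (Eq * ρ0).trace.re = α * (msqrt (msqrt ρ0 * ρ1 * msqrt ρ0)).trace.re ∧
      (Eq * ρ1).trace.re = (msqrt (msqrt ρ0 * ρ1 * msqrt ρ0)).trace.re / α ∧
      η0 * (Eq * ρ0).trace.re + η1 * (Eq * ρ1).trace.re =
        η0 * (α * (msqrt (msqrt ρ0 * ρ1 * msqrt ρ0)).trace.re) +
          η1 * ((msqrt (msqrt ρ0 * ρ1 * msqrt ρ0)).trace.re / α) :=
  optimal_povm_failure_probability_general ρ0 ρ1 V Eq hρ0 hρ1 hrank hfull hV' hpolar α hα hEq η0 η1
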